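/- arXiv:2306.07733 — 3 statements merged into one kernel-verified Lean document; each statement's English description precedes it below -/
import Mathlib

section
/- The family p_m(n) (m, n ∈ ℕ) satisfies p_m(0) = 1, p_m(1) = C_m, and the recursion p_m(n−1)·p_{m+2}(n−1) − p_{m+1}(n−1)^2 = p_m(n)·p_{m+2}(n−2) for all m ∈ ℕ and n ≥ 2; moreover it is the unique such family: if q : ℕ × ℕ → ℚ satisfies q(m,0) = 1 and q(m,1) = C_m for all m ∈ ℕ, and q(m,n−1)·q(m+2,n−1) − q(m+1,n−1)^2 = q(m,n)·q(m+2,n−2) for all m ∈ ℕ and all n ≥ 2, then q(m,n) = p_m(n) for all m, n ∈ ℕ. -/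
/-!
Adding the column `j = m` to the triangle of factors gives `p_{m+1}(x) = p_m(x) r_m(x)` with
`r_m(x) = (2x+m+1)^{(m)} / (m+1)^{(m)}` (rising factorials; `columnRatio` below). The shift rules of rising factorials
then make both `p_m p_{m+2} / p_{m+1}^2` and `p_m(x+1) p_{m+2}(x-1) / (p_m(x) p_{m+2}(x))` explicit
rational functions of `x` and `m`, and the recurrence collapses to
`(y+2m+1)(y+2m+2) - 2(y+m+1)(2m+1) = y(y+1)` with `y = 2x`.
Uniqueness holds because the recurrence determines row `n` from rows `n-1` and `n-2`,
as `p_{m+2}(n-2) ≠ 0`.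
-/

open Finset

/-- `p_m(x) = ∏_{1 ≤ i ≤ j ≤ m-1} (2x+i+j)/(i+j)`. -/
def pRat (m : ℕ) (x : ℚ) : ℚ :=
  ∏ i ∈ Finset.Icc 1 (m - 1), ∏ j ∈ Finset.Icc i (m - 1),
    (2 * x + (i : ℚ) + (j : ℚ)) / ((i : ℚ) + (j : ℚ))

open Polynomial

lemma prod_Icc_add_eq_ascPochhammer_eval {R : Type*} [CommSemiring R] (a : R) (m : ℕ) :
    ∏ i ∈ Icc 1 m, (a + i) = (ascPochhammer R m).eval (a + 1) := by
  induction m with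
  | zero => simp
  | succ m ih =>
    rw [prod_Icc_succ_top (by omega), ih, ascPochhammer_succ_eval]
    push_cast; ring

lemma ascPochhammer_eval_add_one_mul {R : Type*} [CommSemiring R] (m : ℕ) (a : R) :
    (ascPochhammer R m).eval (a + 1) * a = (ascPochhammer R m).eval a * (a + m) := by
  have h := congrArg (eval a) (ascPochhammer_succ_left (S := R) m)
  rw [← ascPochhammer_succ_eval, h]
  simp [mul_comm]

lemma ascPochhammer_eval_succ_add_one_mul {R : Type*} [CommSemiring R] (m : ℕ) (a : R) :
    (ascPochhammer R (m + 1)).eval (a + 1) * a =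
      (ascPochhammer R m).eval a * (a + m) * (a + m + 1) := by
  rw [ascPochhammer_succ_eval, mul_right_comm, ascPochhammer_eval_add_one_mul]
  ring

lemma ascPochhammer_eval_add_two_mul {R : Type*} [CommSemiring R] (m : ℕ) (a : R) :
    (ascPochhammer R m).eval (a + 2) * ((a + 1) * a) =
      (ascPochhammer R m).eval a * ((a + m) * (a + m + 1)) := by
  have h1 := ascPochhammer_eval_add_one_mul m a
  have h2 := ascPochhammer_eval_add_one_mul m (a + 1)
  rw [add_assoc, one_add_one_eq_two] at h2
  calc _ = (ascPochhammer R m).eval (a + 2) * (a + 1) * a := by ring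
    _ = (ascPochhammer R m).eval (a + 1) * a * (a + 1 + m) := by rw [h2]; ring
    _ = _ := by rw [h1]; ring

noncomputable def columnRatio (m : ℕ) (x : ℚ) : ℚ :=
  (ascPochhammer ℚ m).eval (2 * x + m + 1) / (ascPochhammer ℚ m).eval ((m : ℚ) + 1)

lemma pRat_succ (m : ℕ) (x : ℚ) : pRat (m + 1) x = pRat m x * columnRatio m x := by
  have hcol : ∏ i ∈ Icc 1 m, (2 * x + i + m) / ((i : ℚ) + m) = columnRatio m x := by
    rw [prod_div_distrib, columnRatio, ← prod_Icc_add_eq_ascPochhammer_eval,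
      ← prod_Icc_add_eq_ascPochhammer_eval]
    congr 1 <;> refine prod_congr rfl fun i _ => by ring
  rw [← hcol]
  rcases m with _ | k
  · simp [pRat]
  · simp only [pRat, Nat.add_sub_cancel]
    have hinner : ∀ i ∈ Icc 1 (k + 1),
        ∏ j ∈ Icc i (k + 1), (2 * x + i + j) / ((i : ℚ) + j) =
          (∏ j ∈ Icc i k, (2 * x + i + j) / ((i : ℚ) + j)) *
            ((2 * x + i + (k + 1 : ℕ)) / ((i : ℚ) + (k + 1 : ℕ))) :=
      fun i hi => prod_Icc_succ_top (mem_Icc.mp hi).2 _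
    rw [prod_congr rfl hinner, prod_mul_distrib, prod_Icc_succ_top (by omega : 1 ≤ k + 1)]
    simp

lemma columnRatio_zero_right (m : ℕ) : columnRatio m 0 = 1 := by
  rw [columnRatio, mul_zero, zero_add]
  exact div_self (ascPochhammer_pos m _ (by positivity)).ne'

lemma columnRatio_succ_mul (m : ℕ) (x : ℚ) :
    columnRatio (m + 1) x * ((2 * x + m + 1) * (2 * m + 1) * (2 * m + 2)) =
      columnRatio m x * ((m + 1) * (2 * x + 2 * m + 1) * (2 * x + 2 * m + 2)) := by
  have hnum := ascPochhammer_eval_succ_add_one_mul m (2 * x + m + 1)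
  have hden := ascPochhammer_eval_succ_add_one_mul m ((m : ℚ) + 1)
  have hm : (ascPochhammer ℚ m).eval ((m : ℚ) + 1) ≠ 0 :=
    (ascPochhammer_pos _ _ (by positivity)).ne'
  have hm' : (ascPochhammer ℚ (m + 1)).eval ((m : ℚ) + 1 + 1) ≠ 0 :=
    (ascPochhammer_pos _ _ (by positivity)).ne'
  simp only [columnRatio, Nat.cast_succ, show 2 * x + (m + 1) + 1 = 2 * x + m + 1 + 1 by ring]
  rw [div_mul_eq_mul_div, div_mul_eq_mul_div, div_eq_div_iff hm' hm]
  linear_combination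
    (2 * (m : ℚ) + 1) * (2 * m + 2) * (ascPochhammer ℚ m).eval ((m : ℚ) + 1) * hnum
      - (ascPochhammer ℚ m).eval (2 * x + m + 1) * (2 * x + 2 * m + 1) * (2 * x + 2 * m + 2)
        * hden

lemma columnRatio_add_one_mul (m : ℕ) (x : ℚ) :
    columnRatio m (x + 1) * ((2 * x + m + 1) * (2 * x + m + 2)) =
      columnRatio m x * ((2 * x + 2 * m + 1) * (2 * x + 2 * m + 2)) := by
  have h := ascPochhammer_eval_add_two_mul m (2 * x + m + 1)
  simp only [columnRatio, div_mul_eq_mul_div, show 2 * (x + 1) + m + 1 = 2 * x + m + 1 + 2 by ring]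
  congr 1
  linear_combination h

lemma columnRatio_pos (m : ℕ) {x : ℚ} (hx : 0 ≤ x) : 0 < columnRatio m x :=
  div_pos (ascPochhammer_pos _ _ (by positivity)) (ascPochhammer_pos _ _ (by positivity))

lemma pRat_pos (m : ℕ) {x : ℚ} (hx : 0 ≤ x) : 0 < pRat m x := by
  induction m with
  | zero => simp [pRat]
  | succ m ih => rw [pRat_succ]; exact mul_pos ih (columnRatio_pos m hx)

lemma pRat_zero_right (m : ℕ) : pRat m 0 = 1 := by
  induction m with
  | zero => simp [pRat]
  | succ m ih => rw [pRat_succ, ih, columnRatio_zero_right, one_mul]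

lemma succ_succ_mul_catalan_succ (m : ℕ) :
    (m + 2) * catalan (m + 1) = 2 * (2 * m + 1) * catalan m := by
  apply Nat.eq_of_mul_eq_mul_left m.succ_pos
  calc (m + 1) * ((m + 2) * catalan (m + 1)) = (m + 1) * (m + 1).centralBinom := by
        rw [← succ_mul_catalan_eq_centralBinom (m + 1)]
    _ = 2 * (2 * m + 1) * m.centralBinom := Nat.succ_mul_centralBinom_succ m
    _ = (m + 1) * (2 * (2 * m + 1) * catalan m) := by
        rw [← succ_mul_catalan_eq_centralBinom]; ring

lemma pRat_one_right (m : ℕ) : pRat m 1 = catalan m := by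
  induction m with
  | zero => simp [pRat]
  | succ m ih =>
    have hratio := columnRatio_add_one_mul m 0
    have hcat : ((m : ℚ) + 2) * catalan (m + 1) = 2 * (2 * m + 1) * catalan m := by
      exact_mod_cast succ_succ_mul_catalan_succ m
    rw [zero_add, columnRatio_zero_right] at hratio
    rw [pRat_succ, ih]
    apply mul_right_cancel₀ (by positivity : ((m : ℚ) + 1) * (m + 2) ≠ 0)
    linear_combination (catalan m : ℚ) * hratio - ((m : ℚ) + 1) * hcat

lemma pRat_mul_pRat_add_two (m : ℕ) (x : ℚ) :
    pRat m x * pRat (m + 2) x * ((2 * x + m + 1) * (2 * m + 1) * (2 * m + 2)) =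
      pRat (m + 1) x ^ 2 * ((m + 1) * (2 * x + 2 * m + 1) * (2 * x + 2 * m + 2)) := by
  rw [pRat_succ (m + 1), pRat_succ m]
  linear_combination pRat m x ^ 2 * columnRatio m x * columnRatio_succ_mul m x

lemma pRat_add_one_mul_pRat_sub_one (m : ℕ) {x : ℚ} (hx : 0 ≤ x) :
    pRat m (x + 1) * pRat (m + 2) (x - 1) * ((2 * x + 2 * m + 1) * (2 * x + 2 * m + 2)) =
      pRat m x * pRat (m + 2) x * (2 * x * (2 * x + 1)) := by
  induction m with
  | zero =>
    norm_num [pRat]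
    ring
  | succ m ih =>
    have hup := columnRatio_add_one_mul m x
    have hdown := columnRatio_add_one_mul (m + 2) (x - 1)
    rw [sub_add_cancel] at hdown
    rw [pRat_succ m, pRat_succ (m + 2), pRat_succ m, pRat_succ (m + 2)]
    push_cast at hdown ⊢
    apply mul_right_cancel₀ (by positivity :
      (2 * x + 2 * m + 1) * (2 * x + 2 * m + 2) * ((2 * x + m + 1) * (2 * x + m + 2)) ≠ 0)
    linear_combination
      columnRatio m (x + 1) * ((2 * x + m + 1) * (2 * x + m + 2)) * columnRatio (m + 2) (x - 1) *
          ((2 * x + 2 * m + 3) * (2 * x + 2 * m + 4)) * ih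
        + pRat m x * pRat (m + 2) x * (2 * x * (2 * x + 1)) * columnRatio (m + 2) (x - 1) *
          ((2 * x + 2 * m + 3) * (2 * x + 2 * m + 4)) * hup
        - pRat m x * pRat (m + 2) x * (2 * x * (2 * x + 1)) * columnRatio m x *
          ((2 * x + 2 * m + 1) * (2 * x + 2 * m + 2)) * hdown

lemma pRat_mul_pRat_add_two_sub_sq (m : ℕ) {x : ℚ} (hx : 0 ≤ x) :
    pRat m x * pRat (m + 2) x - pRat (m + 1) x ^ 2 = pRat m (x + 1) * pRat (m + 2) (x - 1) := by
  apply mul_right_cancel₀ (by positivity :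
    ((m : ℚ) + 1) * (2 * x + 2 * m + 1) * (2 * x + 2 * m + 2) ≠ 0)
  linear_combination
    pRat_mul_pRat_add_two m x - ((m : ℚ) + 1) * pRat_add_one_mul_pRat_sub_one m hx

lemma eq_pRat_of_recurrence (q : ℕ → ℕ → ℚ) (h0 : ∀ m, q m 0 = 1)
    (h1 : ∀ m, q m 1 = catalan m)
    (hrec : ∀ m n, 2 ≤ n →
      q m (n - 1) * q (m + 2) (n - 1) - q (m + 1) (n - 1) ^ 2 = q m n * q (m + 2) (n - 2))
    (m n : ℕ) : q m n = pRat m n := by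
  induction n using Nat.strong_induction_on generalizing m with
  | _ n ih =>
    rcases n with _ | _ | n
    · rw [h0, Nat.cast_zero, pRat_zero_right]
    · rw [h1, Nat.cast_one, pRat_one_right]
    · show q m (n + 2) = pRat m ((n + 2 : ℕ) : ℚ)
      have hq := hrec m (n + 2) le_add_self
      have hp := pRat_mul_pRat_add_two_sub_sq m (x := n + 1) (by positivity)
      simp only [Nat.add_sub_cancel, Nat.add_succ_sub_one, ih (n + 1) (by omega), ih n (by omega)]
        at hq
      rw [add_sub_cancel_right, add_assoc, one_add_one_eq_two] at hp
      apply mul_right_cancel₀ (pRat_pos (m + 2) n.cast_nonneg).ne'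
      push_cast at hq ⊢
      linear_combination hp - hq

theorem stmt6 :
    (∀ m : ℕ, pRat m 0 = 1) ∧
    (∀ m : ℕ, pRat m 1 = (catalan m : ℚ)) ∧
    (∀ m n : ℕ, 2 ≤ n →
      pRat m ((n : ℚ) - 1) * pRat (m + 2) ((n : ℚ) - 1) - (pRat (m + 1) ((n : ℚ) - 1)) ^ 2 =
        pRat m (n : ℚ) * pRat (m + 2) ((n : ℚ) - 2)) ∧
    (∀ q : ℕ → ℕ → ℚ,
      (∀ m : ℕ, q m 0 = 1) →
      (∀ m : ℕ, q m 1 = (catalan m : ℚ)) →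
      (∀ m n : ℕ, 2 ≤ n →
        q m (n - 1) * q (m + 2) (n - 1) - (q (m + 1) (n - 1)) ^ 2 = q m n * q (m + 2) (n - 2)) →
      ∀ m n : ℕ, q m n = pRat m (n : ℚ)) := by
  refine ⟨pRat_zero_right, pRat_one_right, fun m n hn => ?_, eq_pRat_of_recurrence⟩
  have hx : (0 : ℚ) ≤ n - 1 := by
    have : (2 : ℚ) ≤ n := by exact_mod_cast hn
    linarith
  have h := pRat_mul_pRat_add_two_sub_sq m hx
  rwa [sub_add_cancel, sub_sub, one_add_one_eq_two] at h
end

section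
/- For all m, n ∈ ℕ, the Hankel determinant of Catalan numbers satisfies det(C_{m+i+j})_{i,j=0}^{n−1} = ∏_{1 ≤ i ≤ j ≤ m−1} (2n+i+j)/(i+j) (the right-hand side being an empty product, equal to 1, for m ≤ 1). -/
/-!
Dodgson condensation (the Desnanot–Jacobi identity) applied to the Hankel matrix
`H(m, n) = (C_{m+i+j})_{i,j<n}` gives
`det H(m, n+2) · det H(m+2, n) = det H(m, n+1) · det H(m+2, n+1) - det H(m+1, n+1)²`.
Together with `det H(m, 0) = 1` and `det H(m, 1) = C_m` this determines all the determinants by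
induction on `n`, as long as they stay nonzero. The product `f(m, n)` of the theorem is positive,
takes the same initial values, and satisfies the same recurrence: writing it as
`∏_{j=1}^{m-1} (2n+2j)! j! / ((2n+j)! (2j)!)`, the recurrence comes down to the ratios of
consecutive factors, which are rational functions of `j` and `n`.

Desnanot–Jacobi itself: if `N` is the identity with its first and last columns replaced by those of
`adj M`, then `M N` is `M` with those columns replaced by `det M` times unit vectors, so comparing
determinants gives the identity times `det M`. Applied to `X • 1 + M`, whose determinant is monic,
this factor cancels; evaluating at `X = 0` gives the general case.
-/

open Finset Nat

namespace Matrix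

variable {R : Type*} [CommRing R]

theorem det_updateCol_single_self {k : ℕ} (A : Matrix (Fin (k + 1)) (Fin (k + 1)) R)
    (j : Fin (k + 1)) (c : R) :
    (A.updateCol j (Pi.single j c)).det = c * (A.submatrix j.succAbove j.succAbove).det := by
  rw [det_succ_column _ j, Fintype.sum_eq_single j]
  · simp [submatrix_updateCol_succAbove, ← two_mul, pow_mul]
  · intro i hi
    simp [Pi.single_eq_of_ne hi]

theorem det_updateCol_single_zero_last {k : ℕ} (A : Matrix (Fin (k + 2)) (Fin (k + 2)) R)
    (c : R) :
    ((A.updateCol 0 (Pi.single 0 c)).updateCol (Fin.last _) (Pi.single (Fin.last _) c)).det =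
      c ^ 2 * (A.submatrix (Fin.succ ∘ Fin.castSucc) (Fin.succ ∘ Fin.castSucc)).det := by
  have h : (A.updateCol 0 (Pi.single 0 c)).submatrix Fin.castSucc Fin.castSucc =
      (A.submatrix Fin.castSucc Fin.castSucc).updateCol 0 (Pi.single 0 c) := by
    ext i j
    simp [updateCol_apply, Pi.single_apply]
  rw [det_updateCol_single_self, Fin.succAbove_last, h, det_updateCol_single_self,
    submatrix_submatrix, pow_two, mul_assoc]
  -- `Fin.castSucc ∘ Fin.succ` and `Fin.succ ∘ Fin.castSucc` agree definitionally
  rfl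

theorem det_one_updateCol_updateCol {ι : Type*} [Fintype ι] [DecidableEq ι] {j k : ι}
    (hjk : j ≠ k) (a b : ι → R) :
    (((1 : Matrix ι ι R).updateCol j a).updateCol k b).det = a j * b k - a k * b j := by
  let p : Fin 2 → ι := ![j, k]
  let U : Matrix ι (Fin 2) R := of fun i s => ![a i, b i] s - (1 : Matrix ι ι R) i (p s)
  let V : Matrix (Fin 2) ι R := (1 : Matrix ι ι R).submatrix p (Equiv.refl ι)
  -- `det (1 + U * V) = det (1 + V * U)`, and `1 + V * U = !![a j, b j; a k, b k]`
  have hN : ((1 : Matrix ι ι R).updateCol j a).updateCol k b = 1 + U * V := by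
    ext i l
    simp only [add_apply, mul_apply, Fin.sum_univ_two, U, V, p, of_apply, submatrix_apply,
      Matrix.cons_val_zero, Matrix.cons_val_one, Equiv.refl_apply, updateCol_apply, one_apply]
    split_ifs <;> simp_all [eq_comm]
  rw [hN, det_one_add_mul_comm, one_submatrix_mul, det_fin_two]
  simp only [add_apply, submatrix_apply, Equiv.refl_symm, Equiv.refl_apply, Function.comp_apply,
    id, U, of_apply]
  simp [p, one_apply, hjk, hjk.symm]
  ring

theorem mulVec_adjugate_col {ι : Type*} [Fintype ι] [DecidableEq ι] (A : Matrix ι ι R) (j : ι) :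
    A *ᵥ (fun i => A.adjugate i j) = Pi.single j A.det := by
  ext i
  rw [mulVec, dotProduct, ← mul_apply, mul_adjugate, smul_apply, one_apply, Pi.single_apply]
  simp

theorem desnanot_jacobi_of_isLeftRegular {n : ℕ} (M : Matrix (Fin (n + 2)) (Fin (n + 2)) R)
    (hM : IsLeftRegular M.det) :
    M.det * (M.submatrix (Fin.succ ∘ Fin.castSucc) (Fin.succ ∘ Fin.castSucc)).det =
      (M.submatrix Fin.succ Fin.succ).det * (M.submatrix Fin.castSucc Fin.castSucc).det -
        (M.submatrix Fin.castSucc Fin.succ).det * (M.submatrix Fin.succ Fin.castSucc).det := by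
  set l : Fin (n + 2) := Fin.last (n + 1)
  let N := ((1 : Matrix _ _ R).updateCol 0 fun i => M.adjugate i 0).updateCol l
    fun i => M.adjugate i l
  have hMN : M * N = (M.updateCol 0 (Pi.single 0 M.det)).updateCol l (Pi.single l M.det) := by
    rw [mul_updateCol, mul_updateCol, Matrix.mul_one, mulVec_adjugate_col, mulVec_adjugate_col]
  have hN : N.det =
      M.det * (M.submatrix (Fin.succ ∘ Fin.castSucc) (Fin.succ ∘ Fin.castSucc)).det := by
    apply hM
    dsimp only
    rw [← det_mul, hMN, det_updateCol_single_zero_last, pow_two, mul_assoc]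
  have hsign : (-1 : R) ^ (n + 1) * (-1) ^ (n + 1) = 1 := by
    rw [← pow_add, Even.neg_one_pow ⟨n + 1, rfl⟩]
  rw [← hN, det_one_updateCol_updateCol Fin.last_pos.ne, adjugate_fin_succ_eq_det_submatrix,
    adjugate_fin_succ_eq_det_submatrix, adjugate_fin_succ_eq_det_submatrix,
    adjugate_fin_succ_eq_det_submatrix]
  simp only [l, Fin.succAbove_last, Fin.succAbove_zero, Fin.val_last, Fin.val_zero, zero_add,
    add_zero]
  linear_combination
    ((M.submatrix Fin.succ Fin.succ).det * (M.submatrix Fin.castSucc Fin.castSucc).det -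
      (M.submatrix Fin.castSucc Fin.succ).det * (M.submatrix Fin.succ Fin.castSucc).det) * hsign

open Polynomial in
theorem desnanot_jacobi {n : ℕ} (M : Matrix (Fin (n + 2)) (Fin (n + 2)) R) :
    M.det * (M.submatrix (Fin.succ ∘ Fin.castSucc) (Fin.succ ∘ Fin.castSucc)).det =
      (M.submatrix Fin.succ Fin.succ).det * (M.submatrix Fin.castSucc Fin.castSucc).det -
        (M.submatrix Fin.castSucc Fin.succ).det * (M.submatrix Fin.succ Fin.castSucc).det := by
  let M' : Matrix (Fin (n + 2)) (Fin (n + 2)) R[X] := (X : R[X]) • 1 + M.map C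
  have hM' : M'.map (evalRingHom 0) = M := by ext; simp [M']
  have h := congrArg (evalRingHom 0)
    (desnanot_jacobi_of_isLeftRegular M' (Monic.isRegular (leadingCoeff_det_X_one_add_C M)).left)
  simpa only [map_mul, map_sub, RingHom.map_det, RingHom.mapMatrix_apply, ← submatrix_map, hM']
    using h

end Matrix

section Hankel

variable {R : Type*}

def hankel (c : ℕ → R) (m n : ℕ) : Matrix (Fin n) (Fin n) R :=
  Matrix.of fun i j => c (m + i + j)

theorem hankel_submatrix (c : ℕ → R) {m n k a b : ℕ} {f g : Fin k → Fin n}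
    (hf : ∀ i, (f i : ℕ) = i + a) (hg : ∀ j, (g j : ℕ) = j + b) :
    (hankel c m n).submatrix f g = hankel c (m + a + b) k := by
  ext i j
  simp only [hankel, Matrix.submatrix_apply, Matrix.of_apply, hf, hg]
  congr 1
  ring

theorem det_hankel_add_two_mul_det_hankel [CommRing R] (c : ℕ → R) (m n : ℕ) :
    (hankel c m (n + 2)).det * (hankel c (m + 2) n).det =
      (hankel c m (n + 1)).det * (hankel c (m + 2) (n + 1)).det -
        (hankel c (m + 1) (n + 1)).det ^ 2 := by
  have h := (hankel c m (n + 2)).desnanot_jacobi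
  rw [hankel_submatrix c (a := 1) (b := 1) (fun _ => rfl) (fun _ => rfl),
    hankel_submatrix c (a := 1) (b := 1) Fin.val_succ Fin.val_succ,
    hankel_submatrix c (a := 0) (b := 0) Fin.val_castSucc Fin.val_castSucc,
    hankel_submatrix c (a := 0) (b := 1) Fin.val_castSucc Fin.val_succ,
    hankel_submatrix c (a := 1) (b := 0) Fin.val_succ Fin.val_castSucc] at h
  simp only [add_zero, add_assoc, Nat.reduceAdd] at h
  rw [h]
  ring

end Hankel

def catalanHankelFactor (j n : ℕ) : ℚ :=
  ((2 * n + 2 * j)! * j ! : ℚ) / ((2 * n + j)! * (2 * j)!)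

theorem catalanHankelFactor_pos (j n : ℕ) : 0 < catalanHankelFactor j n := by
  unfold catalanHankelFactor
  positivity

theorem catalanHankelFactor_zero_left (n : ℕ) : catalanHankelFactor 0 n = 1 := by
  simp [catalanHankelFactor, factorial_ne_zero]

theorem catalanHankelFactor_zero_right (j : ℕ) : catalanHankelFactor j 0 = 1 := by
  simp [catalanHankelFactor, mul_comm, factorial_ne_zero]

theorem catalanHankelFactor_succ_left (j n : ℕ) :
    catalanHankelFactor (j + 1) n = catalanHankelFactor j n *
      ((2 * n + 2 * j + 1) * (n + j + 1)) / ((2 * n + j + 1) * (2 * j + 1)) := by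
  unfold catalanHankelFactor
  rw [show 2 * n + 2 * (j + 1) = 2 * n + 2 * j + 1 + 1 by ring,
    show 2 * (j + 1) = 2 * j + 1 + 1 by ring, ← add_assoc]
  simp only [factorial_succ]
  push_cast
  field_simp
  ring

theorem catalanHankelFactor_succ_right (j n : ℕ) :
    catalanHankelFactor j (n + 1) = catalanHankelFactor j n *
      ((2 * n + 2 * j + 1) * (2 * n + 2 * j + 2)) / ((2 * n + j + 1) * (2 * n + j + 2)) := by
  unfold catalanHankelFactor
  rw [show 2 * (n + 1) + 2 * j = 2 * n + 2 * j + 1 + 1 by ring,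
    show 2 * (n + 1) + j = 2 * n + j + 1 + 1 by ring]
  simp only [factorial_succ]
  push_cast
  field_simp
  ring

theorem catalanHankelFactor_one_left (n : ℕ) : catalanHankelFactor 1 n = n + 1 := by
  rw [catalanHankelFactor_succ_left, catalanHankelFactor_zero_left]
  push_cast
  field_simp
  ring

theorem catalanHankelFactor_cross (m n : ℕ) :
    catalanHankelFactor m (n + 2) * catalanHankelFactor (m + 2) n *
        ((2 * m + 3) * (2 * n + m + 4)) =
      catalanHankelFactor (m + 1) (n + 1) ^ 2 * ((2 * m + 1) * (2 * n + m + 3)) := by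
  simp only [catalanHankelFactor_succ_left, catalanHankelFactor_succ_right]
  push_cast
  field_simp
  ring

theorem catalan_mul_factorial (k : ℕ) : catalan k * (k + 1)! * k ! = (2 * k)! := by
  rw [factorial_succ, ← mul_assoc, mul_comm (catalan k), succ_mul_catalan_eq_centralBinom,
    mul_assoc, centralBinom, ← Nat.choose_mul_factorial_mul_factorial (by omega : k ≤ 2 * k),
    show 2 * k - k = k by omega, mul_assoc]

theorem catalanHankelFactor_one_right_mul_catalan (j : ℕ) :
    catalanHankelFactor j 1 * catalan j = catalan (j + 1) := by
  have h₁ : (catalan j : ℚ) * (j + 1)! * j ! = (2 * j)! := by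
    exact_mod_cast catalan_mul_factorial j
  have h₂ : (catalan (j + 1) : ℚ) * (j + 1 + 1)! * (j + 1)! = (2 * (j + 1))! := by
    exact_mod_cast catalan_mul_factorial (j + 1)
  unfold catalanHankelFactor
  rw [show 2 * 1 + 2 * j = 2 * (j + 1) by ring, show 2 * 1 + j = j + 1 + 1 by ring,
    div_mul_eq_mul_div, div_eq_iff (by positivity)]
  linear_combination ((catalan (j + 1) : ℚ) * (j + 1 + 1)!) * h₁ - (j ! * (catalan j : ℚ)) * h₂

theorem prod_Icc_add_mul_factorial (c j : ℕ) : (∏ i ∈ Icc 1 j, (c + i)) * c ! = (c + j)! := by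
  induction j with
  | zero => simp
  | succ j ih =>
    rw [prod_Icc_succ_top (by omega), mul_right_comm, ih, ← add_assoc, factorial_succ, mul_comm]

theorem prod_Icc_div_eq_catalanHankelFactor (j n : ℕ) :
    ∏ i ∈ Icc 1 j, (2 * (n : ℚ) + i + j) / (i + j) = catalanHankelFactor j n := by
  have hnum : (∏ i ∈ Icc 1 j, (2 * (n : ℚ) + i + j)) * (2 * n + j)! = (2 * n + 2 * j)! := by
    rw [show 2 * n + 2 * j = 2 * n + j + j by ring, ← prod_Icc_add_mul_factorial (2 * n + j)]
    push_cast
    congr 1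
    exact prod_congr rfl fun i _ => by ring
  have hden : (∏ i ∈ Icc 1 j, ((i : ℚ) + j)) * j ! = (2 * j)! := by
    rw [two_mul, ← prod_Icc_add_mul_factorial j]
    push_cast
    congr 1
    exact prod_congr rfl fun i _ => by ring
  have hpos : 0 < ∏ i ∈ Icc 1 j, ((i : ℚ) + j) :=
    prod_pos fun i hi => by have := (mem_Icc.mp hi).1; positivity
  rw [catalanHankelFactor, ← hnum, ← hden, prod_div_distrib]
  field_simp

def catalanHankelProd (M n : ℕ) : ℚ := ∏ j ∈ Icc 1 M, catalanHankelFactor j n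

theorem prod_Icc_Icc_eq_catalanHankelProd (M n : ℕ) :
    ∏ i ∈ Icc 1 M, ∏ j ∈ Icc i M, (2 * (n : ℚ) + i + j) / (i + j) = catalanHankelProd M n := by
  rw [prod_comm' (t' := Icc 1 M) (s' := fun j => Icc 1 j)
    (by intro i j; simp only [mem_Icc]; omega)]
  exact prod_congr rfl fun j _ => prod_Icc_div_eq_catalanHankelFactor j n

theorem catalanHankelProd_zero_left (n : ℕ) : catalanHankelProd 0 n = 1 := rfl

theorem catalanHankelProd_succ (M n : ℕ) :
    catalanHankelProd (M + 1) n = catalanHankelProd M n * catalanHankelFactor (M + 1) n :=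
  prod_Icc_succ_top (by omega) _

theorem catalanHankelProd_pos (M n : ℕ) : 0 < catalanHankelProd M n :=
  prod_pos fun j _ => catalanHankelFactor_pos j n

theorem catalanHankelProd_zero_right (M : ℕ) : catalanHankelProd M 0 = 1 :=
  prod_eq_one fun j _ => catalanHankelFactor_zero_right j

theorem catalanHankelProd_one_right (M : ℕ) : catalanHankelProd M 1 = catalan (M + 1) := by
  induction M with
  | zero => simp [catalanHankelProd_zero_left]
  | succ M ih =>
    rw [catalanHankelProd_succ, ih, mul_comm, catalanHankelFactor_one_right_mul_catalan]

theorem catalanHankelProd_cross (M n : ℕ) :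
    catalanHankelProd M (n + 2) * catalanHankelProd (M + 2) n *
        ((2 * M + 3) * (2 * n + M + 4)) =
      (n + 1) * (2 * n + 3) * catalanHankelProd (M + 1) (n + 1) ^ 2 := by
  induction M with
  | zero =>
    simp only [catalanHankelProd_succ, catalanHankelProd_zero_left, catalanHankelFactor_succ_left,
      catalanHankelFactor_zero_left]
    push_cast
    field_simp
    ring
  | succ M ih =>
    have e₁ : catalanHankelProd (M + 1) (n + 2) =
        catalanHankelProd M (n + 2) * catalanHankelFactor (M + 1) (n + 2) :=
      catalanHankelProd_succ _ _
    have e₂ : catalanHankelProd (M + 1 + 2) n =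
        catalanHankelProd (M + 2) n * catalanHankelFactor (M + 1 + 2) n :=
      catalanHankelProd_succ _ _
    have e₃ : catalanHankelProd (M + 1 + 1) (n + 1) =
        catalanHankelProd (M + 1) (n + 1) * catalanHankelFactor (M + 1 + 1) (n + 1) :=
      catalanHankelProd_succ _ _
    rw [e₁, e₂, e₃]
    have h := catalanHankelFactor_cross (M + 1) n
    push_cast at h ⊢
    linear_combination (catalanHankelProd M (n + 2) * catalanHankelProd (M + 2) n) * h +
      catalanHankelFactor (M + 1 + 1) (n + 1) ^ 2 * ih

theorem catalanHankelProd_row (M n : ℕ) :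
    catalanHankelProd M (n + 1) * catalanHankelProd (M + 2) (n + 1) *
        ((2 * M + 3) * (2 * n + M + 4)) =
      (n + M + 3) * (2 * n + 2 * M + 5) * catalanHankelProd (M + 1) (n + 1) ^ 2 := by
  rw [catalanHankelProd_succ (M + 1), catalanHankelProd_succ M,
    catalanHankelFactor_succ_left (M + 1)]
  push_cast
  field_simp
  ring

theorem catalanHankelProd_condensation (m n : ℕ) :
    catalanHankelProd (m - 1) (n + 2) * catalanHankelProd (m + 1) n =
      catalanHankelProd (m - 1) (n + 1) * catalanHankelProd (m + 1) (n + 1) -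
        catalanHankelProd m (n + 1) ^ 2 := by
  rcases m with _ | M
  · simp only [zero_tsub, zero_add, catalanHankelProd_succ, catalanHankelProd_zero_left, one_mul,
      catalanHankelFactor_one_left]
    push_cast
    ring
  · have hD : ((2 * M + 3) * (2 * n + M + 4) : ℚ) ≠ 0 := by positivity
    apply mul_right_cancel₀ hD
    simp only [add_tsub_cancel_right]
    linear_combination catalanHankelProd_cross M n - catalanHankelProd_row M n

theorem det_hankel_catalan (m n : ℕ) :
    (hankel (fun k => (catalan k : ℚ)) m n).det = catalanHankelProd (m - 1) n := by
  induction n using Nat.twoStepInduction generalizing m with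
  | zero => simp [catalanHankelProd_zero_right]
  | one =>
    rcases m with _ | M
    · simp [hankel, catalanHankelProd_zero_left]
    · simp [hankel, catalanHankelProd_one_right]
  | more n ih₀ ih₁ =>
    have h := det_hankel_add_two_mul_det_hankel (fun k => (catalan k : ℚ)) m n
    rw [ih₀, ih₁, ih₁, ih₁, show m + 2 - 1 = m + 1 by omega, show m + 1 - 1 = m by omega] at h
    apply mul_right_cancel₀ (catalanHankelProd_pos (m + 1) n).ne'
    rw [h, catalanHankelProd_condensation]

theorem stmt12 (m n : ℕ) :
    Matrix.det (Matrix.of fun i j : Fin n => (catalan (m + (i : ℕ) + (j : ℕ)) : ℚ)) =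
      ∏ i ∈ Finset.Icc 1 (m - 1), ∏ j ∈ Finset.Icc i (m - 1),
        (2 * (n : ℚ) + (i : ℚ) + (j : ℚ)) / ((i : ℚ) + (j : ℚ)) := by
  rw [prod_Icc_Icc_eq_catalanHankelProd]
  exact det_hankel_catalan m n
end

section
/- Fix b ∈ ℚ. The multiplicative inverse of the formal power series Σ_{n ≥ 0} M_b(n) x^n in ℚ[[x]] is 1 − (1+b)x − Σ_{n ≥ 2} C_{n−1} x^n; that is, (Σ_{n ≥ 0} M_b(n) x^n) · (1 − (1+b)x − Σ_{n ≥ 2} C_{n−1} x^n) = 1 in ℚ[[x]]. -/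
/-!
Let `c = ∑ Cₙ xⁿ`, so that `c = 1 + x c²`. Expanding `c^(m+1) = c^m + x c^(m+2)` shows that the
coefficients of `c^(m+1)` are ballot numbers, and these are exactly the summands of `M_b(n)`, so
`∑ M_b(n) xⁿ = ∑ₘ (b x c)ᵐ c = c / (1 - b x c)`; the geometric series is handled through its
partial sums, which agree with `∑ M_b(n) xⁿ` modulo `x^(N+1)`. On the other hand
`(1 - (1+b)x - ∑_{n ≥ 2} C_{n-1} xⁿ) c = (1 - b x - x c) c = 1 - b x c`, and `c` is a unit.
-/

open Finset

/-- `M_b(n) = ∑_{k=0}^n (C(n+k,k) - C(n+k,k-1)) b^{n-k}`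
(with the convention `C(n+k,-1) = 0`). -/
def MbN (b : ℚ) (n : ℕ) : ℚ :=
  ∑ k ∈ Finset.range (n + 1),
    (((n + k).choose k : ℚ) - if k = 0 then 0 else ((n + k).choose (k - 1) : ℚ)) * b ^ (n - k)

open PowerSeries

theorem catalan_succ_add_choose (n : ℕ) :
    catalan (n + 1) + (2 * n + 2).choose n = (2 * n + 2).choose (n + 1) := by
  have hcat := succ_mul_catalan_eq_centralBinom (n + 1)
  have hchoose := Nat.choose_succ_right_eq (2 * n + 2) n
  rw [Nat.centralBinom_eq_two_mul_choose, mul_add_one] at hcat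
  rw [show 2 * n + 2 - n = n + 2 by omega] at hchoose
  apply Nat.eq_of_mul_eq_mul_left (show 0 < n + 2 by omega)
  linear_combination hcat - hchoose

namespace PowerSeries

variable {R : Type*} [CommRing R]

theorem map_catalanSeries_eq_one_add_X_mul_sq :
    catalanSeries.map (Nat.castRingHom R) =
      1 + X * catalanSeries.map (Nat.castRingHom R) ^ 2 := by
  conv_lhs => rw [← catalanSeries_sq_mul_X_add_one]
  rw [map_add, map_mul, map_pow, map_X, map_one, add_comm, mul_comm]

theorem map_catalanSeries_pow_succ_succ (m : ℕ) :
    catalanSeries.map (Nat.castRingHom R) ^ (m + 2) =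
      catalanSeries.map (Nat.castRingHom R) ^ (m + 1) +
        X * catalanSeries.map (Nat.castRingHom R) ^ (m + 3) := by
  linear_combination catalanSeries.map (Nat.castRingHom R) ^ (m + 1) *
    map_catalanSeries_eq_one_add_X_mul_sq (R := R)

theorem coeff_map_catalanSeries_pow (k m : ℕ) :
    coeff k (catalanSeries.map (Nat.castRingHom R) ^ (m + 1)) =
      ((2 * k + m).choose k : R) - if k = 0 then 0 else ((2 * k + m).choose (k - 1) : R) := by
  induction k generalizing m with
  | zero =>
    rw [coeff_zero_eq_constantCoeff, map_pow, ← coeff_zero_eq_constantCoeff, coeff_map]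
    simp
  | succ k ihk =>
    induction m with
    | zero =>
      rw [pow_one, coeff_map, catalanSeries_coeff, if_neg k.succ_ne_zero, Nat.add_sub_cancel,
        add_zero, show 2 * (k + 1) = 2 * k + 2 by ring, ← catalan_succ_add_choose]
      push_cast
      ring
    | succ m ihm =>
      rw [map_catalanSeries_pow_succ_succ, map_add, coeff_succ_X_mul, ihm, ihk,
        if_neg k.succ_ne_zero, Nat.add_sub_cancel]
      rcases k with _ | k
      · simp only [zero_add, mul_one, Nat.choose_one_right, Nat.cast_add, Nat.cast_ofNat,
          Nat.choose_zero_right, Nat.cast_one, mul_zero, ↓reduceIte, sub_zero, one_ne_zero]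
        ring
      · rw [if_neg k.succ_ne_zero, Nat.add_sub_cancel,
          show 2 * (k + 1 + 1) + (m + 1) = 2 * k + m + 4 + 1 by ring,
          show 2 * (k + 1 + 1) + m = 2 * k + m + 4 by ring,
          show 2 * (k + 1) + (m + 2) = 2 * k + m + 4 by ring,
          Nat.choose_succ_succ (2 * k + m + 4) (k + 1), Nat.choose_succ_succ (2 * k + m + 4) k]
        push_cast
        ring

theorem coeff_C_mul_X_mul_pow_mul_self (b : R) (f : R⟦X⟧) (m n : ℕ) :
    coeff n ((C b * X * f) ^ m * f) = if m ≤ n then b ^ m * coeff (n - m) (f ^ (m + 1)) else 0 := by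
  rw [show (C b * X * f) ^ m * f = C (b ^ m) * (f ^ (m + 1) * X ^ m) by rw [map_pow]; ring,
    coeff_C_mul, coeff_mul_X_pow', mul_ite, mul_zero]

end PowerSeries

local notation "𝒞" => catalanSeries.map (Nat.castRingHom ℚ)

theorem MbN_eq_sum_coeff_catalanSeries_pow (b : ℚ) (n : ℕ) :
    MbN b n = ∑ m ∈ range (n + 1), b ^ m * coeff (n - m) (𝒞 ^ (m + 1)) := by
  rw [MbN, ← sum_range_reflect]
  refine sum_congr rfl fun m hm => ?_
  have hmn : m ≤ n := Nat.lt_succ_iff.mp (mem_range.mp hm)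
  rw [coeff_map_catalanSeries_pow, show n + 1 - 1 - m = n - m by omega,
    show 2 * (n - m) + m = n + (n - m) by omega, show n - (n - m) = m by omega, mul_comm]

theorem X_pow_dvd_mk_MbN_sub (b : ℚ) (N : ℕ) :
    X ^ (N + 1) ∣ PowerSeries.mk (MbN b) - (∑ m ∈ range (N + 1), (C b * X * 𝒞) ^ m) * 𝒞 := by
  refine X_pow_dvd_iff.mpr fun n hn => ?_
  rw [map_sub, coeff_mk, sum_mul, map_sum, sub_eq_zero, MbN_eq_sum_coeff_catalanSeries_pow]
  simp_rw [coeff_C_mul_X_mul_pow_mul_self]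
  rw [← sum_filter]
  congr 1
  ext m
  simp only [mem_range, mem_filter]
  omega

theorem mk_MbN_mul_one_sub (b : ℚ) : PowerSeries.mk (MbN b) * (1 - C b * X * 𝒞) = 𝒞 := by
  ext n
  rw [← sub_eq_zero, ← map_sub]
  refine X_pow_dvd_iff.mp ?_ n (Nat.lt_add_one n)
  obtain ⟨q, hq⟩ := X_pow_dvd_mk_MbN_sub b n
  refine ⟨q * (1 - C b * X * 𝒞) - (C b * 𝒞) ^ (n + 1) * 𝒞, ?_⟩
  linear_combination (1 - C b * X * 𝒞) * hq + 𝒞 * geom_sum_mul_neg (C b * X * 𝒞) (n + 1)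

theorem mk_eq_one_sub_C_mul_X_sub_X_mul_catalan (b : ℚ) :
    PowerSeries.mk (fun n : ℕ =>
        if n = 0 then 1 else if n = 1 then -(1 + b) else -(catalan (n - 1) : ℚ)) =
      1 - C b * X - X * 𝒞 := by
  ext n
  rcases n with _ | _ | n
  · simp
  · simp [sub_eq_add_neg, add_comm]
  · simp [coeff_one]

/-- The series `1 - (1+b)x - ∑_{n ≥ 2} C_{n-1} x^n`. -/
theorem stmt17 (b : ℚ) :
    PowerSeries.mk (fun n : ℕ => MbN b n) *
        PowerSeries.mk (fun n : ℕ =>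
          if n = 0 then 1 else if n = 1 then -(1 + b) else -(catalan (n - 1) : ℚ)) =
      1 := by
  have hunit : IsUnit 𝒞 :=
    isUnit_iff_constantCoeff.mpr (by simp [← coeff_zero_eq_constantCoeff_apply])
  rw [mk_eq_one_sub_C_mul_X_sub_X_mul_catalan]
  refine hunit.mul_right_cancel ?_
  linear_combination mk_MbN_mul_one_sub b +
    PowerSeries.mk (MbN b) * map_catalanSeries_eq_one_add_X_mul_sq (R := ℚ)
end
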